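/- Assume (C, E, s) is an n-exangulated category in which, for every object X, the morphism X → 0 is a trivial inflation and the morphism 0 → X is a trivial deflation; for each object X fix a distinguished n-exangle X → 0 → ⋯ → 0 → ΣX ⇢(δ_X), and let Σ : C → C be the induced functor. Then E¹(−,−) := C(−, Σ−) : C^op × C → Ab is an additive bifunctor; in particular E¹(X₀, 0) = 0 = E¹(0, X₀) and E¹(X₀, Y₀ ⊕ Z₀) ≅ E¹(X₀, Y₀) ⊕ E¹(X₀, Z₀) for all objects X₀, Y₀, Z₀, and dually in the first variable. -/

import Mathlib

/-!
Common definitions: complexes of length `n+2`, `n`-exangulated categories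
(Herschend–Liu–Nakaoka), and `(n+2)`-angulated categories
(Geiss–Keller–Oppermann), formalized from scratch.
-/

open CategoryTheory CategoryTheory.Limits Opposite ZeroObject

universe v u

namespace Paper

/-- A complex concentrated in degrees `0, …, n+1`.  Only the objects in degrees
`0, …, n+1` and the differentials `d 0, …, d n` carry information; all objects in
higher degrees are required to be zero. -/
structure ExCpx (n : ℕ) (C : Type u) [Category.{v} C] [Preadditive C] [HasZeroObject C] where
  obj : ℕ → C
  d : ∀ i, obj i ⟶ obj (i + 1)
  dd : ∀ i, i + 1 ≤ n → d i ≫ d (i + 1) = 0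
  isZero_of_gt : ∀ i, n + 1 < i → IsZero (obj i)

variable {C : Type u} [Category.{v} C] [Preadditive C] [HasZeroObject C] [HasFiniteBiproducts C] [HasBinaryBiproducts C]

/-- Morphisms of complexes of length `n+2`. -/
structure CpxHom {n : ℕ} (X Y : ExCpx n C) where
  f : ∀ i, X.obj i ⟶ Y.obj i
  comm : ∀ i, i ≤ n → X.d i ≫ f (i + 1) = f i ≫ Y.d i

/-- The identity morphism of a complex. -/
def CpxHom.id {n : ℕ} (X : ExCpx n C) : CpxHom X X :=
  ⟨fun _ => 𝟙 _, fun i _ => by simp⟩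

/-- Composition of morphisms of complexes. -/
def CpxHom.comp {n : ℕ} {X Y Z : ExCpx n C} (φ : CpxHom X Y) (ψ : CpxHom Y Z) : CpxHom X Z :=
  ⟨fun i => φ.f i ≫ ψ.f i, fun i hi => by
    rw [← Category.assoc, φ.comm i hi, Category.assoc, ψ.comm i hi, ← Category.assoc]⟩

/-- Chain homotopy between two morphisms of complexes of length `n+2`,
for complexes concentrated in degrees `0, …, n+1`. -/
def Homotopic (n : ℕ) {X Y : ExCpx n C} (φ ψ : CpxHom X Y) : Prop :=
  ∃ h : ∀ i, X.obj (i + 1) ⟶ Y.obj i,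
    (φ.f 0 - ψ.f 0 = X.d 0 ≫ h 0) ∧
    (∀ i, i + 1 ≤ n → φ.f (i + 1) - ψ.f (i + 1) = X.d (i + 1) ≫ h (i + 1) + h i ≫ Y.d i) ∧
    (φ.f (n + 1) - ψ.f (n + 1) = h n ≫ Y.d n)

/-- Homotopy equivalence of complexes which is the identity on the two end terms. -/
def FixedEndsHtpyEquiv (n : ℕ) (X Y : ExCpx n C) (h0 : X.obj 0 = Y.obj 0)
    (h1 : X.obj (n + 1) = Y.obj (n + 1)) : Prop :=
  ∃ (u : CpxHom X Y) (v : CpxHom Y X),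
    u.f 0 = eqToHom h0 ∧ u.f (n + 1) = eqToHom h1 ∧
    v.f 0 = eqToHom h0.symm ∧ v.f (n + 1) = eqToHom h1.symm ∧
    Homotopic n (u.comp v) (CpxHom.id X) ∧ Homotopic n (v.comp u) (CpxHom.id Y)

/-- `EE E B A` is the abelian group `E(B, A)` of `E`-extensions. -/
abbrev EE (E : Cᵒᵖ ⥤ C ⥤ AddCommGrpCat.{v}) (B A : C) : Type v := (E.obj (op B)).obj A

/-- Covariant action `f_* δ` of `E` on extensions. -/
def push {E : Cᵒᵖ ⥤ C ⥤ AddCommGrpCat.{v}} {B A A' : C} (f : A ⟶ A') (δ : EE E B A) :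
    EE E B A' := ((E.obj (op B)).map f) δ

/-- Contravariant action `g^* δ` of `E` on extensions. -/
def pull {E : Cᵒᵖ ⥤ C ⥤ AddCommGrpCat.{v}} {B B' A : C} (g : B' ⟶ B) (δ : EE E B A) :
    EE E B' A := ((E.map g.op).app A) δ

/-- Transport of extensions along equalities of objects. -/
def castE {E : Cᵒᵖ ⥤ C ⥤ AddCommGrpCat.{v}} {B B' A A' : C} (hB : B = B') (hA : A = A')
    (δ : EE E B A) : EE E B' A' := by subst hB; subst hA; exact δ

/-- The type of a "distinguished `n`-exangle" predicate. -/
def DistType (n : ℕ) (C : Type u) [Category.{v} C] [Preadditive C] [HasZeroObject C]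
    (E : Cᵒᵖ ⥤ C ⥤ AddCommGrpCat.{v}) : Type (max u v) :=
  ∀ X : ExCpx n C, EE E (X.obj (n + 1)) (X.obj 0) → Prop

/-- `f` is an inflation: it appears as the `0`-th differential of some
distinguished `n`-exangle. -/
def InflationOf {n : ℕ} {E : Cᵒᵖ ⥤ C ⥤ AddCommGrpCat.{v}} (D : DistType n C E)
    {A B : C} (f : A ⟶ B) : Prop :=
  ∃ (X : ExCpx n C) (δ : EE E (X.obj (n + 1)) (X.obj 0)) (h0 : X.obj 0 = A) (h1 : X.obj 1 = B),
    D X δ ∧ X.d 0 = eqToHom h0 ≫ f ≫ eqToHom h1.symm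

/-- `f` is a deflation: it appears as the `n`-th differential of some
distinguished `n`-exangle. -/
def DeflationOf {n : ℕ} {E : Cᵒᵖ ⥤ C ⥤ AddCommGrpCat.{v}} (D : DistType n C E)
    {A B : C} (f : A ⟶ B) : Prop :=
  ∃ (X : ExCpx n C) (δ : EE E (X.obj (n + 1)) (X.obj 0)) (h0 : X.obj n = A)
    (h1 : X.obj (n + 1) = B),
    D X δ ∧ X.d n = eqToHom h0 ≫ f ≫ eqToHom h1.symm

/-- The mapping cone of a morphism of complexes whose `0`-th component is
(an identity up to equality of objects):
`X₁ → X₂ ⊕ Y₁ → ⋯ → X_{n+1} ⊕ Yₙ → Y_{n+1}` with the usual matrix differentials. -/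
def IsMappingCone (n : ℕ) {X Y : ExCpx n C} (φ : CpxHom X Y) (M : ExCpx n C) : Prop :=
  ∃ (e0 : M.obj 0 = X.obj 1) (etop : M.obj (n + 1) = Y.obj (n + 1))
    (emid : ∀ i, 1 ≤ i → i ≤ n → M.obj i = ((X.obj (i + 1)) ⊞ (Y.obj i))),
    (∀ hn : 1 ≤ n,
      M.d 0 = eqToHom e0 ≫ biprod.lift (-(X.d 1)) (φ.f 1) ≫ eqToHom (emid 1 le_rfl hn).symm) ∧
    (∀ i (h1 : 1 ≤ i) (h2 : i + 1 ≤ n),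
      M.d i = eqToHom (emid i (by omega) (by omega)) ≫
        biprod.desc (biprod.lift (-(X.d (i + 1))) (φ.f (i + 1))) (biprod.lift 0 (Y.d i)) ≫
        eqToHom (emid (i + 1) (by omega) (by omega)).symm) ∧
    (∀ hn : 1 ≤ n,
      M.d n = eqToHom (emid n hn le_rfl) ≫ biprod.desc (φ.f (n + 1)) (Y.d n) ≫ eqToHom etop.symm)

/-- The mapping cocone of a morphism of complexes whose `(n+1)`-st component is
(an identity up to equality of objects):
`X₀ → Y₀ ⊕ X₁ → ⋯ → Y_{n-1} ⊕ Xₙ → Yₙ`. -/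
def IsMappingCocone (n : ℕ) {X Y : ExCpx n C} (φ : CpxHom X Y) (M : ExCpx n C) : Prop :=
  ∃ (e0 : M.obj 0 = X.obj 0) (etop : M.obj (n + 1) = Y.obj n)
    (emid : ∀ i, i + 1 ≤ n → M.obj (i + 1) = ((Y.obj i) ⊞ (X.obj (i + 1)))),
    (∀ hn : 1 ≤ n,
      M.d 0 = eqToHom e0 ≫ biprod.lift (φ.f 0) (X.d 0) ≫ eqToHom (emid 0 hn).symm) ∧
    (∀ i (h2 : i + 2 ≤ n),
      M.d (i + 1) = eqToHom (emid i (by omega)) ≫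
        biprod.desc (biprod.lift (-(Y.d i)) 0) (biprod.lift (φ.f (i + 1)) (X.d (i + 1))) ≫
        eqToHom (emid (i + 1) (by omega)).symm) ∧
    (∀ i (hi : i + 1 = n),
      M.d (i + 1) = eqToHom (emid i hi.le) ≫
        biprod.desc (-(Y.d i) ≫ eqToHom (show Y.obj (i + 1) = Y.obj n by rw [hi]))
          (φ.f (i + 1) ≫ eqToHom (show Y.obj (i + 1) = Y.obj n by rw [hi])) ≫
        eqToHom (show Y.obj n = M.obj (i + 2) by subst hi; exact etop.symm))

/-- An `n`-exangulated structure `(𝔼, 𝔰)` on an additive category `C`: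
`Dist X δ` says that `⟨X, δ⟩` is a distinguished `n`-exangle (i.e. `𝔰(δ) = [X]`),
together with all the axioms of Herschend–Liu–Nakaoka: `𝔰` is an exact
realization ((R0), (R1), (R2), realizing every extension, with values in
homotopy classes of complexes with fixed end terms) satisfying (EA1), (EA2)
and (EA2op). -/
structure NExStruct (n : ℕ) (C : Type u) [Category.{v} C] [Preadditive C] [HasZeroObject C]
    [HasFiniteBiproducts C] [HasBinaryBiproducts C] (E : Cᵒᵖ ⥤ C ⥤ AddCommGrpCat.{v}) : Type (max u v) where
  Dist : DistType n C E
  /-- every extension is realized by some distinguished `n`-exangle -/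
  realize : ∀ {A B : C} (δ : EE E B A),
    ∃ (X : ExCpx n C) (h0 : X.obj 0 = A) (h1 : X.obj (n + 1) = B),
      Dist X (castE h1.symm h0.symm δ)
  /-- distinguished `n`-exangles are `E`-attached complexes -/
  attached_push : ∀ (X : ExCpx n C) (δ : EE E (X.obj (n + 1)) (X.obj 0)),
    Dist X δ → push (X.d 0) δ = 0
  attached_pull : ∀ (X : ExCpx n C) (δ : EE E (X.obj (n + 1)) (X.obj 0)),
    Dist X δ → pull (X.d n) δ = 0
  /-- the realization takes values in homotopy equivalence classes: closure -/
  dist_htpy : ∀ (X Y : ExCpx n C) (h0 : X.obj 0 = Y.obj 0) (h1 : X.obj (n + 1) = Y.obj (n + 1))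
    (δ : EE E (X.obj (n + 1)) (X.obj 0)),
    Dist X δ → FixedEndsHtpyEquiv n X Y h0 h1 → Dist Y (castE h1 h0 δ)
  /-- the realization takes values in homotopy equivalence classes: uniqueness -/
  dist_unique : ∀ (X Y : ExCpx n C) (h0 : X.obj 0 = Y.obj 0) (h1 : X.obj (n + 1) = Y.obj (n + 1))
    (δ : EE E (X.obj (n + 1)) (X.obj 0)),
    Dist X δ → Dist Y (castE h1 h0 δ) → FixedEndsHtpyEquiv n X Y h0 h1
  /-- (R0): morphisms of extensions lift to morphisms of the realizing complexes -/
  liftMor : ∀ (X Y : ExCpx n C) (δ : EE E (X.obj (n + 1)) (X.obj 0))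
    (ρ : EE E (Y.obj (n + 1)) (Y.obj 0)) (a : X.obj 0 ⟶ Y.obj 0)
    (c : X.obj (n + 1) ⟶ Y.obj (n + 1)),
    Dist X δ → Dist Y ρ → push a δ = pull c ρ →
    ∃ φ : CpxHom X Y, φ.f 0 = a ∧ φ.f (n + 1) = c
  /-- (R1), contravariant exactness at the middle terms -/
  exact_contra_mid : ∀ (X : ExCpx n C) (δ : EE E (X.obj (n + 1)) (X.obj 0)), Dist X δ →
    ∀ (W : C) (i : ℕ), i + 1 ≤ n → ∀ g : W ⟶ X.obj (i + 1),
      g ≫ X.d (i + 1) = 0 → ∃ h : W ⟶ X.obj i, h ≫ X.d i = g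
  /-- (R1), contravariant exactness at the last term -/
  exact_contra_top : ∀ (X : ExCpx n C) (δ : EE E (X.obj (n + 1)) (X.obj 0)), Dist X δ →
    ∀ (W : C) (g : W ⟶ X.obj (n + 1)), pull g δ = 0 → ∃ h : W ⟶ X.obj n, h ≫ X.d n = g
  /-- (R1), covariant exactness at the middle terms -/
  exact_cov_mid : ∀ (X : ExCpx n C) (δ : EE E (X.obj (n + 1)) (X.obj 0)), Dist X δ →
    ∀ (W : C) (i : ℕ), i + 1 ≤ n → ∀ g : X.obj (i + 1) ⟶ W,
      X.d i ≫ g = 0 → ∃ h : X.obj (i + 2) ⟶ W, X.d (i + 1) ≫ h = g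
  /-- (R1), covariant exactness at the first term -/
  exact_cov_bot : ∀ (X : ExCpx n C) (δ : EE E (X.obj (n + 1)) (X.obj 0)), Dist X δ →
    ∀ (W : C) (g : X.obj 0 ⟶ W), push g δ = 0 → ∃ h : X.obj 1 ⟶ W, X.d 0 ≫ h = g
  /-- (R2): the zero extension `0 ∈ E(0, A)` is realized by the trivial complex -/
  r2 : ∀ A : C, ∃ X : ExCpx n C, X.obj 0 = A ∧ IsIso (X.d 0) ∧
    (∀ i, 2 ≤ i → IsZero (X.obj i)) ∧ Dist X 0
  /-- (R2), dual: the zero extension `0 ∈ E(A, 0)` is realized by the trivial complex -/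
  r2op : ∀ A : C, ∃ X : ExCpx n C, X.obj (n + 1) = A ∧ IsIso (X.d n) ∧
    (∀ i, i + 1 ≤ n → IsZero (X.obj i)) ∧ Dist X 0
  /-- (EA1): compositions of inflations are inflations -/
  ea1_infl : ∀ {A B D : C} (f : A ⟶ B) (g : B ⟶ D),
    InflationOf Dist f → InflationOf Dist g → InflationOf Dist (f ≫ g)
  /-- (EA1): compositions of deflations are deflations -/
  ea1_defl : ∀ {A B D : C} (f : A ⟶ B) (g : B ⟶ D),
    DeflationOf Dist f → DeflationOf Dist g → DeflationOf Dist (f ≫ g)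
  /-- (EA2): good lifts exist -/
  ea2 : ∀ (X Y : ExCpx n C) (h0 : Y.obj 0 = X.obj 0) (ρ : EE E (Y.obj (n + 1)) (Y.obj 0))
    (c : X.obj (n + 1) ⟶ Y.obj (n + 1)),
    Dist Y ρ → Dist X (castE rfl h0 (pull c ρ)) →
    ∃ φ : CpxHom X Y, φ.f 0 = eqToHom h0.symm ∧ φ.f (n + 1) = c ∧
      ∃ (M : ExCpx n C) (hM0 : M.obj 0 = X.obj 1) (hMtop : M.obj (n + 1) = Y.obj (n + 1)),
        IsMappingCone n φ M ∧
        Dist M (castE hMtop.symm hM0.symm (push (eqToHom h0 ≫ X.d 0) ρ))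
  /-- (EA2op): dually, good lifts exist -/
  ea2op : ∀ (X Y : ExCpx n C) (htop : Y.obj (n + 1) = X.obj (n + 1))
    (ρ : EE E (Y.obj (n + 1)) (Y.obj 0)) (a : Y.obj 0 ⟶ X.obj 0),
    Dist Y ρ → Dist X (castE htop rfl (push a ρ)) →
    ∃ φ : CpxHom Y X, φ.f 0 = a ∧ φ.f (n + 1) = eqToHom htop ∧
      ∃ (M : ExCpx n C) (hM0 : M.obj 0 = Y.obj 0) (hMtop : M.obj (n + 1) = X.obj n),
        IsMappingCocone n φ M ∧
        Dist M (castE hMtop.symm hM0.symm (pull (X.d n ≫ eqToHom htop.symm) ρ))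

/-- The morphism `A → 0` is a trivial inflation: it embeds in a distinguished
`n`-exangle `A → 0 → ⋯ → 0 → Y ⇢ δ`. -/
def TrivialInflation {n : ℕ} {E : Cᵒᵖ ⥤ C ⥤ AddCommGrpCat.{v}} (σ : NExStruct n C E)
    (A : C) : Prop :=
  ∃ (X : ExCpx n C) (δ : EE E (X.obj (n + 1)) (X.obj 0)),
    σ.Dist X δ ∧ X.obj 0 = A ∧ ∀ i, 1 ≤ i → i ≤ n → IsZero (X.obj i)

/-- The morphism `0 → A` is a trivial deflation: it embeds in a distinguished
`n`-exangle `Z → 0 → ⋯ → 0 → A ⇢ δ`. -/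
def TrivialDeflation {n : ℕ} {E : Cᵒᵖ ⥤ C ⥤ AddCommGrpCat.{v}} (σ : NExStruct n C E)
    (A : C) : Prop :=
  ∃ (X : ExCpx n C) (δ : EE E (X.obj (n + 1)) (X.obj 0)),
    σ.Dist X δ ∧ X.obj (n + 1) = A ∧ ∀ i, 1 ≤ i → i ≤ n → IsZero (X.obj i)

/-- An `(n+2)`-`Σ`-sequence `A₀ → A₁ → ⋯ → A_{n+1} → Σ A₀`. -/
structure AngSeq (n : ℕ) (C : Type u) [Category.{v} C] (S : C ⥤ C) where
  obj : ℕ → C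
  d : ∀ i, obj i ⟶ obj (i + 1)
  last : obj (n + 1) ⟶ S.obj (obj 0)

/-- A morphism of `(n+2)`-`Σ`-sequences. -/
structure AngHom {n : ℕ} {S : C ⥤ C} (T T' : AngSeq n C S) where
  f : ∀ i, T.obj i ⟶ T'.obj i
  comm : ∀ i, i ≤ n → T.d i ≫ f (i + 1) = f i ≫ T'.d i
  comm_last : T.last ≫ S.map (f 0) = f (n + 1) ≫ T'.last

/-- `T` and `T'` are isomorphic `(n+2)`-`Σ`-sequences. -/
def IsIsoSeq (n : ℕ) {S : C ⥤ C} (T T' : AngSeq n C S) : Prop :=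
  ∃ φ : AngHom T T', ∀ i, i ≤ n + 1 → IsIso (φ.f i)

/-- `Z` is a direct sum of the `(n+2)`-`Σ`-sequences `X` and `Y`. -/
def IsDirectSumSeq (n : ℕ) {S : C ⥤ C} (Z X Y : AngSeq n C S) : Prop :=
  ∃ (p : AngHom Z X) (q : AngHom Z Y) (ix : AngHom X Z) (iy : AngHom Y Z),
    (∀ i, i ≤ n + 1 → ix.f i ≫ p.f i = 𝟙 _) ∧ (∀ i, i ≤ n + 1 → iy.f i ≫ q.f i = 𝟙 _) ∧
    (∀ i, i ≤ n + 1 → ix.f i ≫ q.f i = 0) ∧ (∀ i, i ≤ n + 1 → iy.f i ≫ p.f i = 0) ∧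
    (∀ i, i ≤ n + 1 → p.f i ≫ ix.f i + q.f i ≫ iy.f i = 𝟙 _)

/-- `R` is the left rotation of the `(n+2)`-`Σ`-sequence `T`. -/
def IsLeftRotation (n : ℕ) {S : C ⥤ C} (T R : AngSeq n C S) : Prop :=
  ∃ (e : ∀ i, i ≤ n → R.obj i = T.obj (i + 1)) (etop : R.obj (n + 1) = S.obj (T.obj 0)),
    (∀ i (hi : i + 1 ≤ n), R.d i = eqToHom (e i (by omega)) ≫ T.d (i + 1) ≫
      eqToHom (e (i + 1) hi).symm) ∧
    (R.d n = eqToHom (e n le_rfl) ≫ T.last ≫ eqToHom etop.symm) ∧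
    (R.last = eqToHom etop ≫ (((-1 : ℤ) ^ n) • S.map (T.d 0)) ≫
      eqToHom (congrArg S.obj (e 0 (Nat.zero_le n))).symm)

/-- `M` is the mapping cone of the morphism `Φ` of `(n+2)`-`Σ`-sequences. -/
def IsMappingConeSeq (n : ℕ) {S : C ⥤ C} {T T' : AngSeq n C S} (Φ : AngHom T T')
    (M : AngSeq n C S) : Prop :=
  ∃ (e : ∀ i, i ≤ n → M.obj i = ((T.obj (i + 1)) ⊞ (T'.obj i)))
    (etop : M.obj (n + 1) = ((S.obj (T.obj 0)) ⊞ (T'.obj (n + 1)))),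
    (∀ i (hi : i + 1 ≤ n), M.d i = eqToHom (e i (by omega)) ≫
        biprod.desc (biprod.lift (-(T.d (i + 1))) (Φ.f (i + 1))) (biprod.lift 0 (T'.d i)) ≫
        eqToHom (e (i + 1) hi).symm) ∧
    (M.d n = eqToHom (e n le_rfl) ≫
        biprod.desc (biprod.lift (-(T.last)) (Φ.f (n + 1))) (biprod.lift 0 (T'.d n)) ≫
        eqToHom etop.symm) ∧
    (M.last = eqToHom etop ≫
        biprod.desc ((-(S.map (T.d 0) ≫ S.map biprod.inl)) + (S.map (Φ.f 0) ≫ S.map biprod.inr))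
          (T'.last ≫ S.map biprod.inr) ≫
        eqToHom (congrArg S.obj (e 0 (Nat.zero_le n))).symm)

/-- An `(n+2)`-angulated structure `(Σ, Θ)` on an additive category `C`
(Geiss–Keller–Oppermann): `Σ = S` is an auto-equivalence, `Θ = Theta` is a class of
`(n+2)`-`Σ`-sequences satisfying the axioms (N1)–(N4). -/
structure NAngStruct (n : ℕ) (C : Type u) [Category.{v} C] [Preadditive C] [HasZeroObject C]
    [HasFiniteBiproducts C] [HasBinaryBiproducts C] (S : C ⥤ C) : Type (max u v) where
  /-- `Σ` is an auto-equivalence -/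
  eqv : S.IsEquivalence
  Theta : AngSeq n C S → Prop
  /-- (N1)(a): closed under isomorphisms -/
  iso_closed : ∀ T T' : AngSeq n C S, Theta T → IsIsoSeq n T T' → Theta T'
  /-- (N1)(a): closed under direct sums -/
  sum_closed : ∀ Z X Y : AngSeq n C S, Theta X → Theta Y → IsDirectSumSeq n Z X Y → Theta Z
  /-- (N1)(a): closed under direct summands -/
  summand_closed : ∀ Z X Y : AngSeq n C S, Theta Z → IsDirectSumSeq n Z X Y → Theta X
  /-- (N1)(b): trivial sequences belong to `Theta` -/
  trivial_mem : ∀ T : AngSeq n C S, IsIso (T.d 0) →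
    (∀ i, 2 ≤ i → i ≤ n + 1 → IsZero (T.obj i)) → Theta T
  /-- (N1)(c): every morphism extends to an `(n+2)`-angle -/
  extend_mor : ∀ {A B : C} (f : A ⟶ B), ∃ T : AngSeq n C S, Theta T ∧
    ∃ (h0 : T.obj 0 = A) (h1 : T.obj 1 = B), T.d 0 = eqToHom h0 ≫ f ≫ eqToHom h1.symm
  /-- (N2): `Theta` is closed under left rotation -/
  rot : ∀ T R : AngSeq n C S, IsLeftRotation n T R → Theta T → Theta R
  /-- (N2): `Theta` is closed under right rotation -/
  rot_inv : ∀ T R : AngSeq n C S, IsLeftRotation n T R → Theta R → Theta T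
  /-- (N3): commutative squares extend to morphisms of `(n+2)`-angles -/
  n3 : ∀ T T' : AngSeq n C S, Theta T → Theta T' →
    ∀ (φ0 : T.obj 0 ⟶ T'.obj 0) (φ1 : T.obj 1 ⟶ T'.obj 1), T.d 0 ≫ φ1 = φ0 ≫ T'.d 0 →
      ∃ Φ : AngHom T T', Φ.f 0 = φ0 ∧ Φ.f 1 = φ1
  /-- (N4): the fillers can be chosen so that the mapping cone belongs to `Theta` -/
  n4 : ∀ T T' : AngSeq n C S, Theta T → Theta T' →
    ∀ (φ0 : T.obj 0 ⟶ T'.obj 0) (φ1 : T.obj 1 ⟶ T'.obj 1), T.d 0 ≫ φ1 = φ0 ≫ T'.d 0 →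
      ∃ Φ : AngHom T T', Φ.f 0 = φ0 ∧ Φ.f 1 = φ1 ∧
        ∃ M : AngSeq n C S, IsMappingConeSeq n Φ M ∧ Theta M

/-- The `(n+2)`-angulated structure `α` on `C` is `E`-compatible with the
`n`-exangulated structure `σ`: every `(n+2)`-angle, viewed as a complex, is a
distinguished `n`-exangle for some extension `δ`. -/
def ECompatible {n : ℕ} {E : Cᵒᵖ ⥤ C ⥤ AddCommGrpCat.{v}} (σ : NExStruct n C E)
    {S : C ⥤ C} (α : NAngStruct n C S) : Prop :=
  ∀ T : AngSeq n C S, α.Theta T →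
    ∃ (X : ExCpx n C) (h : ∀ i, i ≤ n + 1 → X.obj i = T.obj i),
      (∀ i (hi : i ≤ n), X.d i = eqToHom (h i (by omega)) ≫ T.d i ≫
        eqToHom (h (i + 1) (by omega)).symm) ∧
      ∃ δ : EE E (X.obj (n + 1)) (X.obj 0), σ.Dist X δ

/-- The realization `𝔯` of the bifunctor `E¹ = C(-, Σ-)` induced by the chosen
distinguished `n`-exangles `X → 0 → ⋯ → 0 → ΣX ⇢ δ_X`:
`𝔯(ε) := 𝔰(ε^* δ_{X₀})`, i.e. `⟨X, ε⟩` is `𝔯`-distinguished iff `⟨X, ε^* δ_{X₀}⟩`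
is `𝔰`-distinguished. -/
def DistR {n : ℕ} {E : Cᵒᵖ ⥤ C ⥤ AddCommGrpCat.{v}} (σ : NExStruct n C E) (F : C ⥤ C)
    (δ : ∀ X : C, EE E (F.obj X) X) :
    ∀ X : ExCpx n C, (X.obj (n + 1) ⟶ F.obj (X.obj 0)) → Prop :=
  fun X ε => σ.Dist X (pull ε (δ (X.obj 0)))

/-- Inflations with respect to a hom-valued (i.e. `E¹ = C(-, Σ-)`-valued)
distinguished-`n`-exangle predicate. -/
def HInflationOf {n : ℕ} (F : C ⥤ C)
    (R : ∀ X : ExCpx n C, (X.obj (n + 1) ⟶ F.obj (X.obj 0)) → Prop)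
    {A B : C} (f : A ⟶ B) : Prop :=
  ∃ (X : ExCpx n C) (ε : X.obj (n + 1) ⟶ F.obj (X.obj 0)) (h0 : X.obj 0 = A)
    (h1 : X.obj 1 = B), R X ε ∧ X.d 0 = eqToHom h0 ≫ f ≫ eqToHom h1.symm

/-- Deflations with respect to a hom-valued distinguished-`n`-exangle predicate. -/
def HDeflationOf {n : ℕ} (F : C ⥤ C)
    (R : ∀ X : ExCpx n C, (X.obj (n + 1) ⟶ F.obj (X.obj 0)) → Prop)
    {A B : C} (f : A ⟶ B) : Prop :=
  ∃ (X : ExCpx n C) (ε : X.obj (n + 1) ⟶ F.obj (X.obj 0)) (h0 : X.obj n = A)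
    (h1 : X.obj (n + 1) = B), R X ε ∧ X.d n = eqToHom h0 ≫ f ≫ eqToHom h1.symm

end Paper

/-!
By (R1), the map `g ↦ g^* δ_Y` out of `C(W, ΣY)` has kernel the maps factoring through the
zero object in degree `n` of the chosen `n`-exangle, so it is injective. Since it is additive
and turns `Σf` into `f_* δ_X`, which is additive in `f`, `Σ` is additive. The vanishing and
biproduct statements are then formal consequences in a preadditive category.
-/

section Biprod

variable {D : Type*} [Category D] [Preadditive D]

noncomputable def homBiprodAddEquiv [HasBinaryBiproducts D] (W A B : D) :
    (W ⟶ A ⊞ B) ≃+ (W ⟶ A) × (W ⟶ B) where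
  toFun f := (f ≫ biprod.fst, f ≫ biprod.snd)
  invFun p := biprod.lift p.1 p.2
  left_inv f := by ext <;> simp
  right_inv p := by simp
  map_add' f g := by simp

noncomputable def biprodHomAddEquiv [HasBinaryBiproducts D] (A B W : D) :
    (A ⊞ B ⟶ W) ≃+ (A ⟶ W) × (B ⟶ W) where
  toFun f := (biprod.inl ≫ f, biprod.inr ≫ f)
  invFun p := biprod.desc p.1 p.2
  left_inv f := by ext <;> simp
  right_inv p := by simp
  map_add' f g := by simp

def homCongrRightAddEquiv {P Q : D} (W : D) (e : P ≅ Q) : (W ⟶ P) ≃+ (W ⟶ Q) where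
  toFun f := f ≫ e.hom
  invFun g := g ≫ e.inv
  left_inv f := by simp
  right_inv g := by simp
  map_add' f g := Preadditive.add_comp _ _ _ _ _ _

end Biprod

namespace Paper

section Extensions

variable {C : Type u} [Category.{v} C] [Preadditive C] {E : Cᵒᵖ ⥤ C ⥤ AddCommGrpCat.{v}}

lemma pull_add [E.Additive] {W B A : C} (g g' : W ⟶ B) (ρ : EE E B A) :
    pull (g + g') ρ = pull g ρ + pull g' ρ := by
  simp only [pull]
  rw [show (g + g').op = g.op + g'.op from rfl, E.map_add]
  rfl

lemma pull_sub [E.Additive] {W B A : C} (g g' : W ⟶ B) (ρ : EE E B A) :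
    pull (g - g') ρ = pull g ρ - pull g' ρ := by
  simp only [pull]
  rw [show (g - g').op = g.op - g'.op from rfl, Functor.map_sub]
  rfl

lemma push_add [∀ X : Cᵒᵖ, (E.obj X).Additive] {B A A' : C} (f f' : A ⟶ A')
    (ρ : EE E B A) : push (f + f') ρ = push f ρ + push f' ρ := by
  simp only [push]
  rw [(E.obj (op B)).map_add]
  rfl

lemma NExStruct.eq_zero_of_pull_eq_zero [HasZeroObject C] [HasFiniteBiproducts C]
    [HasBinaryBiproducts C] {n : ℕ} (σ : NExStruct n C E) {X : ExCpx n C}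
    {A B : C} (h0 : X.obj 0 = A) (h1 : X.obj (n + 1) = B) {ρ : EE E B A}
    (hX : σ.Dist X (castE h1.symm h0.symm ρ)) (hXn : IsZero (X.obj n))
    {W : C} (g : W ⟶ B) (hg : pull g ρ = 0) : g = 0 := by
  subst h0 h1
  obtain ⟨h, rfl⟩ := σ.exact_contra_top X _ hX W g hg
  rw [hXn.eq_of_tgt h 0, zero_comp]

lemma additive_of_push_eq_pull [∀ X : Cᵒᵖ, (E.obj X).Additive] [E.Additive]
    {F : C ⥤ C} {δ : ∀ X : C, EE E (F.obj X) X}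
    (hF : ∀ {X Y : C} (f : X ⟶ Y), push f (δ X) = pull (F.map f) (δ Y))
    (hδ : ∀ (Y W : C) (g : W ⟶ F.obj Y), pull g (δ Y) = 0 → g = 0) : F.Additive where
  map_add {X Y f g} := by
    rw [← sub_eq_zero]
    apply hδ Y
    rw [pull_sub, pull_add, ← hF, ← hF, ← hF, push_add, sub_self]

end Extensions

theorem statement_11 {C : Type u} [Category.{v} C] [Preadditive C] [HasZeroObject C]
    [HasFiniteBiproducts C] [HasBinaryBiproducts C]
    (E : Cᵒᵖ ⥤ C ⥤ AddCommGrpCat.{v}) [∀ X : Cᵒᵖ, (E.obj X).Additive] [E.Additive]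
    (n : ℕ) (hn : 0 < n) (σ : NExStruct n C E)
    (htriv : ∀ X : C, TrivialInflation σ X ∧ TrivialDeflation σ X)
    (F : C ⥤ C) (cpx : C → ExCpx n C)
    (hc0 : ∀ X : C, (cpx X).obj 0 = X) (hctop : ∀ X : C, (cpx X).obj (n + 1) = F.obj X)
    (hmid : ∀ (X : C) (i : ℕ), 1 ≤ i → i ≤ n → IsZero ((cpx X).obj i))
    (δ : ∀ X : C, EE E (F.obj X) X)
    (hdist : ∀ X : C, σ.Dist (cpx X) (castE (hctop X).symm (hc0 X).symm (δ X)))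
    (hF : ∀ {X Y : C} (f : X ⟶ Y), push f (δ X) = pull (F.map f) (δ Y)) :
    F.Additive ∧
    (∀ (X₀ Z : C), IsZero Z → ∀ ε : X₀ ⟶ F.obj Z, ε = 0) ∧
    (∀ (X₀ Z : C), IsZero Z → ∀ ε : Z ⟶ F.obj X₀, ε = 0) ∧
    (∀ X₀ Y₀ Z₀ : C,
      Nonempty ((X₀ ⟶ F.obj (Y₀ ⊞ Z₀)) ≃+ ((X₀ ⟶ F.obj Y₀) × (X₀ ⟶ F.obj Z₀)))) ∧
    (∀ X₀ Y₀ Z₀ : C,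
      Nonempty (((X₀ ⊞ Y₀) ⟶ F.obj Z₀) ≃+ ((X₀ ⟶ F.obj Z₀) × (Y₀ ⟶ F.obj Z₀)))) := by
  have hadd : F.Additive := additive_of_push_eq_pull hF fun Y _ g =>
    σ.eq_zero_of_pull_eq_zero (hc0 Y) (hctop Y) (hdist Y) (hmid Y n hn le_rfl) g
  have := preservesBinaryBiproducts_of_preservesBiproducts F
  exact ⟨hadd, fun _ _ hZ _ => (F.map_isZero hZ).eq_of_tgt _ _,
    fun _ _ hZ _ => hZ.eq_of_src _ _,
    fun X₀ Y₀ Z₀ => ⟨(homCongrRightAddEquiv X₀ (F.mapBiprod Y₀ Z₀)).trans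
      (homBiprodAddEquiv _ _ _)⟩,
    fun _ _ _ => ⟨biprodHomAddEquiv _ _ _⟩⟩

end Paper
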